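/- For every lattice Λ of rank n there exists a complete filtration {0} = Λ₀ ⊂ Λ₁ ⊂ ⋯ ⊂ Λ_n = Λ by pure sublattices with rk(Λ_i) = i and covol(Λ_i/Λ_{i−1}) ≤ √n·λ_n(Λ) for all 1 ≤ i ≤ n. Consequently, for every t ∈ span(Λ) there exists c ∈ Λ with ‖c − t‖ ≤ (n/2)·λ_n(Λ). -/

import Mathlib

open scoped RealInnerProductSpace
open Metric

noncomputable section

variable {E : Type*} [NormedAddCommGroup E] [InnerProductSpace ℝ E] [FiniteDimensional ℝ E]

/-- `L ⊆ E` is a lattice of rank `n`: it is generated (over `ℤ`) by `n`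
`ℝ`-linearly independent vectors. -/
def IsLatticeOfRank (L : Submodule ℤ E) (n : ℕ) : Prop :=
  ∃ b : Fin n → E, LinearIndependent ℝ b ∧ L = Submodule.span ℤ (Set.range b)

/-- The real span of a lattice. -/
def latSpan (L : Submodule ℤ E) : Submodule ℝ E := Submodule.span ℝ (L : Set E)

/-- The covering radius of a lattice, computed inside its real span. -/
def covRad (L : Submodule ℤ E) : ℝ :=
  ⨆ x : latSpan L, infDist (x : E) (L : Set E)

/-- `L'` is a pure sublattice of `L`: the quotient is torsion-free. -/
def IsPureIn (L' L : Submodule ℤ E) : Prop :=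
  L' ≤ L ∧ ∀ v ∈ L, ∀ m : ℤ, m ≠ 0 → m • v ∈ L' → v ∈ L'

/-- Orthogonal projection of `E` onto the orthogonal complement of the span
of `L'`, as a `ℤ`-linear endomorphism of `E`. -/
def projPerp (L' : Submodule ℤ E) : E →ₗ[ℤ] E :=
  ((latSpan L')ᗮ.subtype.comp (Submodule.orthogonalProjectionOnto (latSpan L')ᗮ).toLinearMap).restrictScalars ℤ

/-- The quotient lattice `L/L'`, realized as the image of `L` under the
orthogonal projection onto the orthogonal complement of the span of `L'`. -/
def quotLat (L L' : Submodule ℤ E) : Submodule ℤ E := L.map (projPerp L')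

/-- The `i`-th successive minimum of a set `S`: the infimum of `r > 0` such
that `S` contains `i` linearly independent vectors of norm at most `r`. -/
def succMin (S : Set E) (i : ℕ) : ℝ :=
  sInf {r : ℝ | 0 < r ∧ ∃ v : Fin i → E,
    (∀ j, v j ∈ S) ∧ LinearIndependent ℝ v ∧ ∀ j, ‖v j‖ ≤ r}

/-- `x` belongs to the dual lattice of `L`. -/
def MemDual (L : Submodule ℤ E) (x : E) : Prop :=
  ∀ v ∈ L, ∃ m : ℤ, ⟪x, v⟫ = (m : ℝ)

/-- The dual lattice of `L`, as a set. -/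
def dualSet (L : Submodule ℤ E) : Set E := {x | MemDual L x}

/-- The covolume of the lattice generated by `b`, as the square root of the
Gram determinant of `b`. -/
def gramVol {k : ℕ} (b : Fin k → E) : ℝ :=
  Real.sqrt (Matrix.det (Matrix.of fun i j => ⟪b i, b j⟫))

/-!
Pick linearly independent lattice vectors `w 0, …, w (n-1)` with `‖w j‖ ≤ λₙ(Λ)`; the infimum
defining `λₙ` is attained because a lattice meets every ball in finitely many points. Cutting `Λ`
by the real spans of `w 0, …, w (i-1)` gives a filtration by pure sublattices of ranks
`0, …, n`. The projection of `w i` orthogonally to the span of `Λᵢ` is a nonzero vector of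
`Λᵢ₊₁/Λᵢ`, hence an integer multiple of its generator, which is therefore no longer than
`‖w i‖ ≤ λₙ(Λ) ≤ √n λₙ(Λ)`. Finally, rounding the coordinates of `t` in the basis `w` moves it by
at most `∑ ‖w j‖ / 2 ≤ n λₙ(Λ) / 2`.
-/

open Submodule

section NormedSpace

variable {V : Type*} [SeminormedAddCommGroup V] [NormedSpace ℝ V]

theorem norm_le_norm_of_mem_span_int_singleton {x g : V} (hx : x ∈ span ℤ {g}) (hx0 : x ≠ 0) :
    ‖g‖ ≤ ‖x‖ := by
  obtain ⟨m, rfl⟩ := mem_span_singleton.1 hx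
  have hm : m ≠ 0 := by rintro rfl; exact hx0 (zero_smul ℤ g)
  rw [norm_zsmul ℝ, Real.norm_eq_abs, ← Int.cast_abs]
  exact le_mul_of_one_le_left (norm_nonneg g) (by exact_mod_cast Int.one_le_abs hm)

theorem exists_mem_span_int_norm_sub_le {ι : Type*} [Fintype ι] (w : ι → V) {t : V}
    (ht : t ∈ span ℝ (Set.range w)) :
    ∃ c ∈ span ℤ (Set.range w), ‖c - t‖ ≤ (∑ j, ‖w j‖) / 2 := by
  obtain ⟨s, rfl⟩ := (mem_span_range_iff_exists_fun ℝ).1 ht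
  refine ⟨∑ j, round (s j) • w j,
    sum_mem fun j _ => zsmul_mem (subset_span (Set.mem_range_self j)) _, ?_⟩
  calc ‖∑ j, round (s j) • w j - ∑ j, s j • w j‖
      = ‖∑ j, ((round (s j) : ℝ) - s j) • w j‖ := by
        simp only [sub_smul, Finset.sum_sub_distrib, Int.cast_smul_eq_zsmul]
    _ ≤ ∑ j, |(round (s j) : ℝ) - s j| * ‖w j‖ := by
        refine norm_sum_le_of_le _ fun j _ => ?_
        rw [norm_smul, Real.norm_eq_abs]
    _ ≤ ∑ j, 1 / 2 * ‖w j‖ := by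
        gcongr with j
        rw [abs_sub_comm]
        exact abs_sub_round (s j)
    _ = (∑ j, ‖w j‖) / 2 := by rw [← Finset.mul_sum]; ring

end NormedSpace

section Discrete

variable {E : Type*} [NormedAddCommGroup E]

theorem discreteTopology_span_int_of_linearIndependent [NormedSpace ℝ E] {ι : Type*} [Finite ι]
    {b : ι → E} (hb : LinearIndependent ℝ b) : DiscreteTopology (span ℤ (Set.range b)) := by
  set F := span ℝ (Set.range b)
  have himage : F.subtype '' (span ℤ (Set.range (Module.Basis.span hb)) : Set F) =
      span ℤ (Set.range b) := by
    rw [← LinearMap.coe_restrictScalars ℤ, ← map_coe, map_span, ← Set.range_comp]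
    congr 2
    ext j
    simp [Module.Basis.span_apply]
  have hdisc : IsDiscrete (F.subtype '' (span ℤ (Set.range (Module.Basis.span hb)) : Set F)) :=
    (isDiscrete_iff_discreteTopology.2 (inferInstanceAs
      (DiscreteTopology (span ℤ (Set.range (Module.Basis.span hb)))))).image
      Topology.IsInducing.subtypeVal
  rw [himage] at hdisc
  exact isDiscrete_iff_discreteTopology.1 hdisc

theorem finite_setOf_mem_norm_le [ProperSpace E] (L : Submodule ℤ E) [DiscreteTopology L]
    (r : ℝ) : {x ∈ (L : Set E) | ‖x‖ ≤ r}.Finite := by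
  have : DiscreteTopology L.toAddSubgroup := ‹DiscreteTopology L›
  refine (Metric.finite_isBounded_inter_isClosed (s := (L.toAddSubgroup : Set E))
    DiscreteTopology.isDiscrete
    (Metric.isBounded_closedBall (x := 0) (r := r)) AddSubgroup.isClosed_of_discrete).subset ?_
  rintro x ⟨hxL, hxr⟩
  exact ⟨mem_closedBall_zero_iff.2 hxr, hxL⟩

end Discrete

section Lattice

variable {E : Type*} [NormedAddCommGroup E] [InnerProductSpace ℝ E]

theorem IsLatticeOfRank.exists_linearIndependent_mem {L : Submodule ℤ E} {n : ℕ}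
    (hL : IsLatticeOfRank L n) : ∃ b : Fin n → E, (∀ j, b j ∈ L) ∧ LinearIndependent ℝ b := by
  obtain ⟨b, hb, rfl⟩ := hL
  exact ⟨b, fun j => subset_span (Set.mem_range_self j), hb⟩

theorem IsLatticeOfRank.discreteTopology {L : Submodule ℤ E} {n : ℕ} (hL : IsLatticeOfRank L n) :
    DiscreteTopology L := by
  obtain ⟨b, hb, rfl⟩ := hL
  exact discreteTopology_span_int_of_linearIndependent hb

theorem IsLatticeOfRank.finrank_latSpan {L : Submodule ℤ E} {n : ℕ} (hL : IsLatticeOfRank L n) :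
    Module.finrank ℝ (latSpan L) = n := by
  obtain ⟨b, hb, rfl⟩ := hL
  rw [latSpan, span_span_of_tower, finrank_span_eq_card hb, Fintype.card_fin]

/-- `M` is a full `ℤ`-lattice in its real span `V`, so a `ℤ`-basis of `M` is an `ℝ`-basis of `V`. -/
theorem isLatticeOfRank_finrank_latSpan [FiniteDimensional ℝ E] (M : Submodule ℤ E)
    [DiscreteTopology M] : IsLatticeOfRank M (Module.finrank ℝ (latSpan M)) := by
  set V := latSpan M
  set M₀ := ZLattice.comap ℝ M V.subtype
  have hmap : M₀.map (V.subtype.restrictScalars ℤ) = M := by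
    exact map_comap_eq_self fun x hx => ⟨⟨x, subset_span hx⟩, rfl⟩
  have : DiscreteTopology M₀ :=
    ZLattice.comap_discreteTopology ℝ M V.subtype.continuous_of_finiteDimensional
      (injective_subtype V)
  have : IsZLattice ℝ M₀ := ⟨by
    rw [← (map_injective_of_injective (injective_subtype V)).eq_iff, map_span, Submodule.map_top,
      range_subtype, ← LinearMap.coe_restrictScalars ℤ, ← map_coe, hmap]
    rfl⟩
  set b := (Module.finBasisOfFinrankEq ℤ M₀ (ZLattice.rank ℝ M₀)).ofZLatticeBasis ℝ M₀
  refine ⟨V.subtype ∘ b, b.linearIndependent.map' V.subtype (ker_subtype V), ?_⟩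
  rw [Set.range_comp, ← LinearMap.coe_restrictScalars ℤ, ← map_span,
    Module.Basis.ofZLatticeBasis_span, hmap]

end Lattice

section SuccessiveMinima

variable {E : Type*} [NormedAddCommGroup E] [InnerProductSpace ℝ E]

theorem succMin_nonneg (S : Set E) (i : ℕ) : 0 ≤ succMin S i :=
  Real.sInf_nonneg fun _ hr => hr.1.le

theorem exists_linearIndependent_norm_le_succMin {S : Set E} {n : ℕ}
    (hS : ∀ r, {x ∈ S | ‖x‖ ≤ r}.Finite)
    (hne : ∃ v : Fin n → E, (∀ j, v j ∈ S) ∧ LinearIndependent ℝ v) :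
    ∃ w : Fin n → E, (∀ j, w j ∈ S) ∧ LinearIndependent ℝ w ∧ ∀ j, ‖w j‖ ≤ succMin S n := by
  set R := {r : ℝ | 0 < r ∧ ∃ v : Fin n → E,
    (∀ j, v j ∈ S) ∧ LinearIndependent ℝ v ∧ ∀ j, ‖v j‖ ≤ r}
  have hR : R.Nonempty := by
    obtain ⟨v, hvS, hv⟩ := hne
    refine ⟨‖v‖ + 1, by positivity, v, hvS, hv, fun j => ?_⟩
    linarith [norm_le_pi_norm v j]
  set r₀ := succMin S n + 1
  set C := {v : Fin n → E | v ∈ Set.pi Set.univ (fun _ => {x ∈ S | ‖x‖ ≤ r₀}) ∧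
    LinearIndependent ℝ v}
  have hC : C.Finite := (Set.Finite.pi fun _ => hS r₀).subset fun v hv => hv.1
  have hr₀ : 0 ≤ r₀ := by linarith [succMin_nonneg S n]
  have mem_C : ∀ r ∈ R, r ≤ r₀ → ∃ v ∈ C, ‖v‖ ≤ r := by
    rintro r ⟨hr, v, hvS, hv, hvr⟩ hrr₀
    exact ⟨v, ⟨fun j _ => ⟨hvS j, (hvr j).trans hrr₀⟩, hv⟩,
      (pi_norm_le_iff_of_nonneg hr.le).2 hvr⟩
  have hCne : C.Nonempty := by
    obtain ⟨r, hrR, hr⟩ := exists_lt_of_csInf_lt hR (lt_add_one (succMin S n))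
    exact (mem_C r hrR hr.le).imp fun v hv => hv.1
  obtain ⟨w, ⟨hwS, hw⟩, hmin⟩ := Set.exists_min_image C (‖·‖) hC hCne
  have hw_le : ‖w‖ ≤ succMin S n := by
    refine le_csInf hR fun r hrR => ?_
    rcases le_or_gt r r₀ with hr | hr
    · obtain ⟨v, hvC, hvr⟩ := mem_C r hrR hr
      exact (hmin v hvC).trans hvr
    · exact ((pi_norm_le_iff_of_nonneg hr₀).2 fun j => (hwS j trivial).2).trans hr.le
  exact ⟨w, fun j => (hwS j trivial).1, hw, fun j => (norm_le_pi_norm w j).trans hw_le⟩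

end SuccessiveMinima

section Quotient

variable {E : Type*} [NormedAddCommGroup E] [InnerProductSpace ℝ E] [FiniteDimensional ℝ E]

theorem projPerp_apply (M : Submodule ℤ E) (x : E) :
    projPerp M x = (latSpan M)ᗮ.starProjection x := by
  rw [starProjection_apply]
  rfl

theorem norm_projPerp_le (M : Submodule ℤ E) (x : E) : ‖projPerp M x‖ ≤ ‖x‖ := by
  rw [projPerp_apply]
  exact norm_starProjection_apply_le _ x

theorem projPerp_eq_zero_iff {M : Submodule ℤ E} {x : E} :
    projPerp M x = 0 ↔ x ∈ latSpan M := by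
  rw [projPerp_apply, starProjection_apply_eq_zero_iff, orthogonal_orthogonal]

theorem norm_le_of_quotLat_eq_span_singleton {M M' : Submodule ℤ E} {x g : E} (hx : x ∈ M)
    (hxM' : x ∉ latSpan M') (hg : quotLat M M' = span ℤ {g}) : ‖g‖ ≤ ‖x‖ := by
  have hmem : projPerp M' x ∈ span ℤ {g} := hg ▸ mem_map_of_mem hx
  exact (norm_le_norm_of_mem_span_int_singleton hmem (mt projPerp_eq_zero_iff.1 hxM')).trans
    (norm_projPerp_le M' x)

end Quotient

theorem isPureIn_inf_restrictScalars {E : Type*} [NormedAddCommGroup E] [InnerProductSpace ℝ E]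
    (L : Submodule ℤ E) (V : Submodule ℝ E) : IsPureIn (L ⊓ V.restrictScalars ℤ) L := by
  refine ⟨inf_le_left, fun v hv m hm hmv => ⟨hv, ?_⟩⟩
  have hmv : (m : ℝ) • v ∈ V := by
    rw [Int.cast_smul_eq_zsmul]
    exact hmv.2
  simpa [hm] using V.smul_mem (m : ℝ)⁻¹ hmv

section Flag

variable {V : Type*} [AddCommGroup V] [Module ℝ V] {n : ℕ} (w : Fin n → V)

def prefixSpan (i : ℕ) : Submodule ℝ V := span ℝ (w '' {j | (j : ℕ) < i})

theorem prefixSpan_zero : prefixSpan w 0 = ⊥ := by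
  simp [prefixSpan]

theorem prefixSpan_self : prefixSpan w n = span ℝ (Set.range w) := by
  simp [prefixSpan]

theorem prefixSpan_mono : Monotone (prefixSpan w) :=
  fun _ _ hik => span_mono (Set.image_mono fun _ hj => lt_of_lt_of_le hj hik)

theorem mem_prefixSpan {i : ℕ} {j : Fin n} (hj : (j : ℕ) < i) : w j ∈ prefixSpan w i :=
  subset_span ⟨j, hj, rfl⟩

variable {w}

theorem finrank_prefixSpan (hw : LinearIndependent ℝ w) {i : ℕ} (hi : i ≤ n) :
    Module.finrank ℝ (prefixSpan w i) = i := by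
  have hrange : w '' {j | (j : ℕ) < i} = Set.range (w ∘ Fin.castLE hi) := by
    ext x
    constructor
    · rintro ⟨j, hj, rfl⟩
      exact ⟨⟨j, hj⟩, rfl⟩
    · rintro ⟨j, rfl⟩
      exact ⟨Fin.castLE hi j, j.isLt, rfl⟩
  rw [prefixSpan, hrange, finrank_span_eq_card (hw.comp _ (Fin.castLE_injective hi)),
    Fintype.card_fin]

theorem notMem_prefixSpan (hw : LinearIndependent ℝ w) (j : Fin n) : w j ∉ prefixSpan w j :=
  hw.notMem_span_image (by simp)

def latticeFlag (L : Submodule ℤ V) (w : Fin n → V) (i : ℕ) : Submodule ℤ V :=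
  L ⊓ (prefixSpan w i).restrictScalars ℤ

variable {L : Submodule ℤ V}

theorem latticeFlag_zero : latticeFlag L w 0 = ⊥ := by
  rw [latticeFlag, prefixSpan_zero, restrictScalars_bot, inf_bot_eq]

theorem latticeFlag_self (hL : (L : Set V) ⊆ span ℝ (Set.range w)) : latticeFlag L w n = L := by
  rw [latticeFlag, prefixSpan_self]
  exact inf_eq_left.2 hL

theorem mem_latticeFlag {j : Fin n} (hwj : w j ∈ L) {i : ℕ} (hj : (j : ℕ) < i) :
    w j ∈ latticeFlag L w i :=
  ⟨hwj, mem_prefixSpan w hj⟩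

theorem latticeFlag_lt_succ (hwL : ∀ j, w j ∈ L) (hw : LinearIndependent ℝ w) {i : ℕ}
    (hi : i < n) : latticeFlag L w i < latticeFlag L w (i + 1) := by
  refine SetLike.lt_iff_le_and_exists.2 ⟨inf_le_inf_left _ (prefixSpan_mono w i.le_succ),
    w ⟨i, hi⟩, mem_latticeFlag (hwL _) i.lt_succ_self, fun h => ?_⟩
  exact notMem_prefixSpan hw ⟨i, hi⟩ h.2

end Flag

section LatticeFlag

variable {E : Type*} [NormedAddCommGroup E] [InnerProductSpace ℝ E] {n : ℕ} {w : Fin n → E}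
  {L : Submodule ℤ E}

theorem latSpan_latticeFlag (hwL : ∀ j, w j ∈ L) (i : ℕ) :
    latSpan (latticeFlag L w i) = prefixSpan w i := by
  refine le_antisymm (span_le.2 fun x hx => hx.2) (span_le.2 ?_)
  rintro _ ⟨j, hj, rfl⟩
  exact subset_span (mem_latticeFlag (hwL j) hj)

theorem isLatticeOfRank_latticeFlag [FiniteDimensional ℝ E] [DiscreteTopology L]
    (hwL : ∀ j, w j ∈ L) (hw : LinearIndependent ℝ w) {i : ℕ} (hi : i ≤ n) :
    IsLatticeOfRank (latticeFlag L w i) i := by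
  have : DiscreteTopology (latticeFlag L w i) :=
    DiscreteTopology.of_subset ‹DiscreteTopology L› inf_le_left
  have h := isLatticeOfRank_finrank_latSpan (latticeFlag L w i)
  rwa [latSpan_latticeFlag hwL, finrank_prefixSpan hw hi] at h

theorem span_range_eq_latSpan [FiniteDimensional ℝ E] (hL : IsLatticeOfRank L n)
    (hwL : ∀ j, w j ∈ L) (hw : LinearIndependent ℝ w) : span ℝ (Set.range w) = latSpan L := by
  refine eq_of_le_of_finrank_le (span_mono (Set.range_subset_iff.2 hwL)) ?_
  rw [hL.finrank_latSpan, finrank_span_eq_card hw, Fintype.card_fin]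

end LatticeFlag

/-- Every lattice Λ of rank n admits a complete filtration
{0} = Λ₀ ⊂ Λ₁ ⊂ ⋯ ⊂ Λ_n = Λ by pure sublattices with rk(Λ_i) = i and
covol(Λ_i/Λ_{i−1}) ≤ √n·λ_n(Λ) (each rank-one quotient being generated by a
vector of norm at most √n·λ_n(Λ)); consequently every t ∈ span(Λ) admits
c ∈ Λ with ‖c − t‖ ≤ (n/2)·λ_n(Λ). -/
theorem exists_good_filtration_and_close_vector
    {E : Type*} [NormedAddCommGroup E] [InnerProductSpace ℝ E] [FiniteDimensional ℝ E]
    (n : ℕ) (L : Submodule ℤ E) (hL : IsLatticeOfRank L n) :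
    (∃ Lc : ℕ → Submodule ℤ E,
      Lc 0 = ⊥ ∧ Lc n = L ∧
      (∀ i < n, Lc i < Lc (i + 1)) ∧
      (∀ i ≤ n, IsLatticeOfRank (Lc i) i) ∧
      (∀ i ≤ n, IsPureIn (Lc i) L) ∧
      (∀ i < n, ∀ g : E,
        quotLat (Lc (i + 1)) (Lc i) = Submodule.span ℤ {g} →
        ‖g‖ ≤ Real.sqrt n * succMin (L : Set E) n)) ∧
    (∀ t ∈ latSpan L, ∃ c ∈ L,
      ‖c - t‖ ≤ (n : ℝ) / 2 * succMin (L : Set E) n) := by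
  have := hL.discreteTopology
  obtain ⟨w, hwL, hw, hwmin⟩ := exists_linearIndependent_norm_le_succMin
    (finite_setOf_mem_norm_le L) hL.exists_linearIndependent_mem
  have hspan := span_range_eq_latSpan hL hwL hw
  refine ⟨⟨latticeFlag L w, latticeFlag_zero, latticeFlag_self (hspan ▸ subset_span),
    fun i hi => latticeFlag_lt_succ hwL hw hi, fun i hi => isLatticeOfRank_latticeFlag hwL hw hi,
    fun i _ => isPureIn_inf_restrictScalars L _, fun i hi g hg => ?_⟩, fun t ht => ?_⟩
  · have hgw := norm_le_of_quotLat_eq_span_singleton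
      (mem_latticeFlag (hwL ⟨i, hi⟩) i.lt_succ_self)
      (latSpan_latticeFlag hwL i ▸ notMem_prefixSpan hw ⟨i, hi⟩) hg
    have hn : 1 ≤ Real.sqrt n := Real.one_le_sqrt.2 (by exact_mod_cast hi.pos)
    exact hgw.trans ((hwmin _).trans (le_mul_of_one_le_left (succMin_nonneg _ _) hn))
  · obtain ⟨c, hc, hct⟩ := exists_mem_span_int_norm_sub_le w (hspan ▸ ht)
    refine ⟨c, span_le.2 (Set.range_subset_iff.2 hwL) hc, hct.trans ?_⟩
    calc (∑ j, ‖w j‖) / 2 ≤ (∑ _j : Fin n, succMin (L : Set E) n) / 2 := by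
          gcongr with j
          exact hwmin j
      _ = (n : ℝ) / 2 * succMin (L : Set E) n := by
          rw [Finset.sum_const, Finset.card_univ, Fintype.card_fin, nsmul_eq_mul]
          ring

end
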